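/- arXiv:1206.4831 — 3 statements merged into one kernel-verified Lean document; each statement's English description precedes it below -/
import Mathlib

section
/- Let (H_k)_{k≥0} be a sequence of nonnegative C¹ functions on [0,∞) with H_k(0) = 0 and H_k'(t) ≤ C·H_k(t) + H_{k+1}(t) for all k and t ≥ 0, where C > 0 is independent of k. Then for every p ≥ 1 and t ≥ 0, H_0(t) ≤ (1/(p−1)!) ∫_0^t (t−s)^{p−1} e^{C(t−s)} H_p(s) ds. -/
/-!
With `E_k(t) = e^{-Ct} H_k(t)` the differential inequality becomes `E_k' ≤ E_{k+1}`, so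
`E_k(t) ≤ ∫_0^t E_{k+1}` because `E_k(0) = 0`. Iterating, and collapsing the nested integrals by
Cauchy's formula for repeated integration (one integration by parts per step), gives
`E_0(t) ≤ ∫_0^t (t-s)^{p-1}/(p-1)! E_p(s) ds`; multiplying by `e^{Ct}` gives the claim.
-/

open Set Real intervalIntegral
open scoped Nat

theorem exp_neg_mul_sub_le_integral_of_hasDerivAt_le {f f' g : ℝ → ℝ} {C a t : ℝ} (hat : a ≤ t)
    (hf : ∀ s ∈ Icc a t, HasDerivAt f (f' s) s) (hg : ContinuousOn g (Icc a t))
    (hle : ∀ s ∈ Ioo a t, f' s ≤ C * f s + g s) :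
    exp (-(C * t)) * f t - exp (-(C * a)) * f a ≤ ∫ s in a..t, exp (-(C * s)) * g s := by
  have hderiv : ∀ s ∈ Icc a t, HasDerivAt (fun x => exp (-(C * x)) * f x)
      (exp (-(C * s)) * (f' s - C * f s)) s := fun s hs =>
    ((((hasDerivAt_id s).const_mul C).neg.exp).mul (hf s hs)).congr_deriv
      (by simp only [Pi.neg_apply, id_eq]; ring)
  refine sub_le_integral_of_hasDeriv_right_of_le hat
    (fun s hs => (hderiv s hs).continuousAt.continuousWithinAt)
    (fun s hs => (hderiv s (Ioo_subset_Icc_self hs)).hasDerivWithinAt)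
    ((continuous_exp.comp (continuous_const_mul C).neg).continuousOn.mul hg).integrableOn_Icc
    fun s hs => ?_
  exact mul_le_mul_of_nonneg_left (by linarith [hle s hs]) (exp_pos _).le

theorem continuousOn_primitive_of_le {g : ℝ → ℝ} {a t : ℝ} (hat : a ≤ t)
    (hg : ContinuousOn g (Icc a t)) : ContinuousOn (fun s => ∫ u in a..s, g u) (Icc a t) := by
  rw [← uIcc_of_le hat] at hg ⊢
  exact continuousOn_primitive_interval hg.integrableOn_uIcc

theorem integral_sub_pow_mul_primitive_eq {g : ℝ → ℝ} {a t : ℝ} (hat : a ≤ t)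
    (hg : ContinuousOn g (Icc a t)) (m : ℕ) :
    ∫ s in a..t, (t - s) ^ m / m ! * ∫ u in a..s, g u
      = ∫ s in a..t, (t - s) ^ (m + 1) / (m + 1)! * g s := by
  have hu : ∀ s, HasDerivAt (fun x => (t - x) ^ (m + 1) / (m + 1)!) (-((t - s) ^ m / m !)) s := by
    intro s
    refine ((((hasDerivAt_id s).const_sub t).pow (m + 1)).div_const ((m + 1)! : ℝ)).congr_deriv ?_
    rw [Nat.factorial_succ, id_eq]
    push_cast
    field_simp
  have hv : ∀ s ∈ Ioo (min a t) (max a t), HasDerivAt (fun x => ∫ u in a..x, g u) (g s) s := by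
    intro s hs
    rw [min_eq_left hat, max_eq_right hat] at hs
    exact integral_hasDerivAt_right
      ((hg.mono (Icc_subset_Icc_right hs.2.le)).intervalIntegrable_of_Icc hs.1.le)
      ((hg.mono Ioo_subset_Icc_self).stronglyMeasurableAtFilter isOpen_Ioo s hs)
      (hg.continuousAt (Icc_mem_nhds hs.1 hs.2))
  have hibp := integral_mul_deriv_eq_deriv_mul_of_hasDerivAt
    (fun s _ => (hu s).continuousAt.continuousWithinAt)
    (by simpa only [uIcc_of_le hat] using continuousOn_primitive_of_le hat hg)
    (fun s _ => hu s) hv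
    ((by fun_prop : Continuous fun s => -((t - s) ^ m / m !)).intervalIntegrable a t)
    (hg.intervalIntegrable_of_Icc hat)
  rw [hibp, integral_same, sub_self, zero_pow m.succ_ne_zero]
  simp only [zero_div, zero_mul, mul_zero, sub_zero, neg_mul, integral_neg, zero_sub, neg_neg]

theorem le_integral_sub_pow_mul_of_le_primitive {E : ℕ → ℝ → ℝ} {a t : ℝ} (hat : a ≤ t)
    (hE : ∀ k, ContinuousOn (E k) (Icc a t))
    (hle : ∀ k, ∀ s ∈ Icc a t, E k s ≤ ∫ u in a..s, E (k + 1) u) (m : ℕ) :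
    E 0 t ≤ ∫ s in a..t, (t - s) ^ m / m ! * E (m + 1) s := by
  induction m with
  | zero => simpa using hle 0 t (right_mem_Icc.2 hat)
  | succ m ih =>
    have hweight : ContinuousOn (fun s => (t - s) ^ m / m !) (Icc a t) := by fun_prop
    have hprim : ContinuousOn (fun s => ∫ u in a..s, E (m + 2) u) (Icc a t) :=
      continuousOn_primitive_of_le hat (hE (m + 2))
    calc E 0 t ≤ ∫ s in a..t, (t - s) ^ m / m ! * E (m + 1) s := ih
      _ ≤ ∫ s in a..t, (t - s) ^ m / m ! * ∫ u in a..s, E (m + 2) u :=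
        integral_mono_on hat ((hweight.mul (hE (m + 1))).intervalIntegrable_of_Icc hat)
          ((hweight.mul hprim).intervalIntegrable_of_Icc hat) fun s hs =>
          mul_le_mul_of_nonneg_left (hle (m + 1) s hs)
            (div_nonneg (pow_nonneg (sub_nonneg.2 hs.2) m) (by positivity))
      _ = ∫ s in a..t, (t - s) ^ (m + 1) / (m + 1)! * E (m + 2) s :=
        integral_sub_pow_mul_primitive_eq hat (hE (m + 2)) m

theorem iterated_gronwall_general (H H' : ℕ → ℝ → ℝ) (C : ℝ)
    (hderiv : ∀ k t, 0 ≤ t → HasDerivAt (H k) (H' k t) t)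
    (hineq : ∀ k t, 0 ≤ t → H' k t ≤ C * H k t + H (k+1) t)
    (hzero : ∀ k, H k 0 = 0) :
    ∀ p : ℕ, 1 ≤ p → ∀ t : ℝ, 0 ≤ t →
      H 0 t ≤ (1 / ((p-1).factorial : ℝ)) *
        ∫ s in (0:ℝ)..t, (t-s)^(p-1) * Real.exp (C*(t-s)) * H p s := by
  intro p hp t ht
  obtain ⟨m, rfl⟩ : ∃ m, p = m + 1 := ⟨p - 1, by omega⟩
  set E : ℕ → ℝ → ℝ := fun k s => exp (-(C * s)) * H k s
  have hH : ∀ k, ContinuousOn (H k) (Icc 0 t) := fun k s hs =>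
    (hderiv k s hs.1).continuousAt.continuousWithinAt
  have hE : ∀ k, ContinuousOn (E k) (Icc 0 t) := fun k =>
    (continuous_exp.comp (continuous_const_mul C).neg).continuousOn.mul (hH k)
  have hle : ∀ k, ∀ s ∈ Icc 0 t, E k s ≤ ∫ u in 0..s, E (k + 1) u := fun k s hs => by
    simpa [E, hzero] using exp_neg_mul_sub_le_integral_of_hasDerivAt_le hs.1
      (fun x hx => hderiv k x hx.1) ((hH (k + 1)).mono (Icc_subset_Icc_right hs.2))
      (fun x hx => hineq k x hx.1.le)
  calc H 0 t = exp (C * t) * E 0 t := by simp [E, ← mul_assoc, ← exp_add]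
    _ ≤ exp (C * t) * ∫ s in 0..t, (t - s) ^ m / m ! * E (m + 1) s := by
      gcongr
      exact le_integral_sub_pow_mul_of_le_primitive ht hE hle m
    _ = _ := by
      rw [← integral_const_mul, ← integral_const_mul]
      congr 1 with s
      simp only [E, add_tsub_cancel_right, mul_sub, exp_sub, exp_neg]
      field_simp

/-- Iterated Gronwall lemma: if `H_k(0) = 0` and `H_k' ≤ C H_k + H_{k+1}`, then
`H_0(t) ≤ (1/(p-1)!) ∫_0^t (t-s)^{p-1} e^{C(t-s)} H_p(s) ds`. -/
theorem iterated_gronwall (H H' : ℕ → ℝ → ℝ) (C : ℝ) (hC : 0 < C)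
    (hderiv : ∀ k t, 0 ≤ t → HasDerivAt (H k) (H' k t) t)
    (hcont : ∀ k, Continuous (H' k))
    (hnonneg : ∀ k t, 0 ≤ t → 0 ≤ H k t)
    (hineq : ∀ k t, 0 ≤ t → H' k t ≤ C * H k t + H (k+1) t)
    (hzero : ∀ k, H k 0 = 0) :
    ∀ p : ℕ, 1 ≤ p → ∀ t : ℝ, 0 ≤ t →
      H 0 t ≤ (1 / ((p-1).factorial : ℝ)) *
        ∫ s in (0:ℝ)..t, (t-s)^(p-1) * Real.exp (C*(t-s)) * H p s :=
  iterated_gronwall_general H H' C hderiv hineq hzero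
end

section
/- Under the hypotheses of the previous construction (λ₀,…,λ_N distinct in an interval I, weight ρ positive on I with ∫_I R/ρ = ∑_k R(λ_k) for all R of degree ≤ 2N+1), the map M : L²(I, ρ dv) → L²(I, ρ dv) defined by Mf = ∑_{i=0}^N (∫_I v^i f(v) dv) · T̃_i(v)/ρ(v) is a well-defined bounded linear projection (M∘M = M) which is self-adjoint for the inner product φ(f,g) = ∫_I f g ρ dv. -/
open Matrix MeasureTheory RealInnerProductSpace

/-!
The functions `hᵢ(v) = vⁱ/ρ(v)` lie in `L²(ρ dv)`, and `⟪hᵢ, f⟫ = ∫ vⁱ f(v) dv`. By the quadrature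
rule their Gram matrix is `∑ₖ λₖ^(i+j) = (P Pᵀ)ᵢⱼ`, which is invertible because `P` is a Vandermonde
matrix on distinct nodes, and `T̃ᵢ/ρ = ∑ₖ Qₖᵢ hₖ` with `Q = (P Pᵀ)⁻¹`. Hence
`M f = ∑ᵢ ⟪hᵢ, f⟫ ∑ₖ Qₖᵢ hₖ` is the orthogonal projection onto the span of the `hᵢ`.
-/

section GramProjection

variable {E ι : Type*} [NormedAddCommGroup E] [InnerProductSpace ℝ E] [Fintype ι]

/-- For `Q = (gram ℝ H)⁻¹` this is the orthogonal projection onto the span of `H`. -/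
noncomputable def gramProjection (H : ι → E) (Q : Matrix ι ι ℝ) : E →L[ℝ] E :=
  ∑ i, (innerSL ℝ (H i)).smulRight (∑ k, Q k i • H k)

lemma gramProjection_apply (H : ι → E) (Q : Matrix ι ι ℝ) (x : E) :
    gramProjection H Q x = ∑ i, ⟪H i, x⟫ • ∑ k, Q k i • H k := by
  simp [gramProjection]

lemma inner_gramProjection_right [DecidableEq ι] {H : ι → E} {Q : Matrix ι ι ℝ}
    (hQ : gram ℝ H * Q = 1) (j : ι) (x : E) :
    ⟪H j, gramProjection H Q x⟫ = ⟪H j, x⟫ := by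
  have dual : ∀ i, ⟪H j, ∑ k, Q k i • H k⟫ = (1 : Matrix ι ι ℝ) j i := by
    intro i
    simp [← hQ, mul_apply, inner_sum, real_inner_smul_right, mul_comm]
  simp [gramProjection_apply, inner_sum, real_inner_smul_right, dual, one_apply]

lemma gramProjection_idempotent [DecidableEq ι] {H : ι → E} {Q : Matrix ι ι ℝ}
    (hQ : gram ℝ H * Q = 1) (x : E) :
    gramProjection H Q (gramProjection H Q x) = gramProjection H Q x := by
  rw [gramProjection_apply H Q (gramProjection H Q x)]
  simp only [inner_gramProjection_right hQ]
  exact (gramProjection_apply H Q x).symm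

lemma inner_gramProjection_left (H : ι → E) (Q : Matrix ι ι ℝ) (x y : E) :
    ⟪gramProjection H Q x, y⟫ = ∑ i, ∑ k, Q k i * ⟪H i, x⟫ * ⟪H k, y⟫ := by
  simp only [gramProjection_apply, sum_inner, real_inner_smul_left, Finset.mul_sum]
  exact Finset.sum_congr rfl fun i _ => Finset.sum_congr rfl fun k _ => by ring

lemma inner_gramProjection_comm {H : ι → E} {Q : Matrix ι ι ℝ} (hQ : Q.IsSymm) (x y : E) :
    ⟪gramProjection H Q x, y⟫ = ⟪x, gramProjection H Q y⟫ := by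
  rw [real_inner_comm _ x, inner_gramProjection_left, inner_gramProjection_left, Finset.sum_comm]
  refine Finset.sum_congr rfl fun i _ => Finset.sum_congr rfl fun k _ => ?_
  rw [hQ.apply]
  ring

end GramProjection

section Lp

variable {α : Type*} [MeasurableSpace α] {μ : Measure α}

lemma MeasureTheory.Lp.coeFn_sum_smul {ι 𝕜 E : Type*} [NormedRing 𝕜] [NormedAddCommGroup E]
    [Module 𝕜 E] [IsBoundedSMul 𝕜 E] {p : ENNReal} (s : Finset ι) (c : ι → 𝕜) (u : ι → Lp E p μ) :
    ⇑(∑ i ∈ s, c i • u i) =ᵐ[μ] fun v => ∑ i ∈ s, c i • u i v := by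
  classical
  induction s using Finset.induction_on with
  | empty =>
    rw [Finset.sum_empty]
    filter_upwards [Lp.coeFn_zero E p μ] with v hv
    simpa using hv
  | insert a s ha ih =>
    filter_upwards [Lp.coeFn_add (c a • u a) (∑ i ∈ s, c i • u i), Lp.coeFn_smul (c a) (u a), ih]
      with v hadd hsmul hsum
    rw [Finset.sum_insert ha, hadd, Pi.add_apply, hsmul, Pi.smul_apply, hsum, Finset.sum_insert ha]

lemma MeasureTheory.L2.inner_eq_integral_of_ae_eq {h f : Lp ℝ 2 μ} {φ : α → ℝ} (hφ : h =ᵐ[μ] φ) :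
    ⟪h, f⟫ = ∫ v, φ v * f v ∂μ := by
  rw [L2.inner_def]
  refine integral_congr_ae ?_
  filter_upwards [hφ] with v hv
  simp [hv, mul_comm]

lemma coeFn_gramProjection {ι : Type*} [Fintype ι] (H : ι → Lp ℝ 2 μ) (Q : Matrix ι ι ℝ)
    (f : Lp ℝ 2 μ) :
    gramProjection H Q f =ᵐ[μ] fun v => ∑ i, ⟪H i, f⟫ * ∑ k, Q k i * H k v := by
  rw [gramProjection_apply]
  filter_upwards [Lp.coeFn_sum_smul Finset.univ (fun i => ⟪H i, f⟫) (fun i => ∑ k, Q k i • H k),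
    ae_all_iff.mpr fun i => Lp.coeFn_sum_smul Finset.univ (Q · i) H] with v hv hG
  rw [hv]
  simp only [hG, smul_eq_mul]

end Lp

section WeightedL2

open Measure

variable {I : Set ℝ} {ρ : ℝ → ℝ}

local notation "ρdv[" I ", " ρ "]" => withDensity (restrict volume I) fun v => ENNReal.ofReal (ρ v)

lemma integral_withDensity_ofReal (hI : MeasurableSet I) (hρ : ∀ v ∈ I, 0 ≤ ρ v)
    (hmeas : Measurable ρ) (g : ℝ → ℝ) :
    ∫ v, g v ∂ρdv[I, ρ] = ∫ v in I, ρ v * g v := by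
  rw [integral_withDensity_eq_integral_toReal_smul hmeas.ennreal_ofReal
    (Filter.Eventually.of_forall fun _ => ENNReal.ofReal_lt_top)]
  refine setIntegral_congr_fun hI fun v hv => ?_
  simp [ENNReal.toReal_ofReal (hρ v hv)]

lemma integral_withDensity_pow_div_mul (hI : MeasurableSet I) (hρ : ∀ v ∈ I, 0 < ρ v)
    (hmeas : Measurable ρ) (i : ℕ) (g : ℝ → ℝ) :
    ∫ v, v ^ i / ρ v * g v ∂ρdv[I, ρ] = ∫ v in I, v ^ i * g v := by
  rw [integral_withDensity_ofReal hI (fun v hv => (hρ v hv).le) hmeas]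
  refine setIntegral_congr_fun hI fun v hv => ?_
  field_simp [(hρ v hv).ne']

lemma memLp_two_withDensity_pow_div (hI : MeasurableSet I) (hρ : ∀ v ∈ I, 0 < ρ v)
    (hmeas : Measurable ρ) {i : ℕ}
    (hint : Integrable (fun v => v ^ (2 * i) / ρ v) (volume.restrict I)) :
    MemLp (fun v => v ^ i / ρ v) 2 ρdv[I, ρ] := by
  have hmeas_pow_div : Measurable fun v => v ^ i / ρ v := by fun_prop
  rw [memLp_two_iff_integrable_sq hmeas_pow_div.aestronglyMeasurable,
    integrable_withDensity_iff hmeas.ennreal_ofReal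
      (Filter.Eventually.of_forall fun _ => ENNReal.ofReal_lt_top)]
  refine hint.congr ?_
  filter_upwards [ae_restrict_mem hI] with v hv
  rw [ENNReal.toReal_ofReal (hρ v hv).le]
  field_simp [(hρ v hv).ne']
  ring

lemma inner_eq_setIntegral_pow_mul (hI : MeasurableSet I) (hρ : ∀ v ∈ I, 0 < ρ v)
    (hmeas : Measurable ρ) {i : ℕ} {h : Lp ℝ 2 ρdv[I, ρ]}
    (hh : h =ᵐ[ρdv[I, ρ]] fun v => v ^ i / ρ v) (f : Lp ℝ 2 ρdv[I, ρ]) :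
    ⟪h, f⟫ = ∫ w in I, w ^ i * f w := by
  rw [L2.inner_eq_integral_of_ae_eq hh, integral_withDensity_pow_div_mul hI hρ hmeas]

lemma gram_eq_vandermonde_transpose_mul_vandermonde (hI : MeasurableSet I)
    (hρ : ∀ v ∈ I, 0 < ρ v) (hmeas : Measurable ρ) {n : ℕ} {lam : Fin (n + 1) → ℝ}
    (hquad : ∀ R : Polynomial ℝ, R.natDegree ≤ 2 * n →
      ∫ v in I, R.eval v / ρ v = ∑ k, R.eval (lam k))
    {H : Fin (n + 1) → Lp ℝ 2 ρdv[I, ρ]} (hH : ∀ i, H i =ᵐ[ρdv[I, ρ]] fun v => v ^ (i : ℕ) / ρ v) :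
    gram ℝ H = (vandermonde lam)ᵀ * vandermonde lam := by
  ext i k
  have hdeg : (Polynomial.X ^ ((i : ℕ) + k) : Polynomial ℝ).natDegree ≤ 2 * n := by
    rw [Polynomial.natDegree_X_pow]
    omega
  calc gram ℝ H i k
      = ∫ v, v ^ (i : ℕ) / ρ v * (v ^ (k : ℕ) / ρ v) ∂ρdv[I, ρ] := by
        rw [gram_apply, L2.inner_eq_integral_of_ae_eq (hH i)]
        refine integral_congr_ae ?_
        filter_upwards [hH k] with v hv
        rw [hv]
    _ = ∫ v in I, (Polynomial.X ^ ((i : ℕ) + k) : Polynomial ℝ).eval v / ρ v := by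
        rw [integral_withDensity_pow_div_mul hI hρ hmeas]
        simp only [pow_add, Polynomial.eval_mul, Polynomial.eval_pow, Polynomial.eval_X,
          mul_div_assoc]
    _ = ((vandermonde lam)ᵀ * vandermonde lam) i k := by
        rw [hquad _ hdeg, vandermonde_transpose_mul_vandermonde]
        simp

end WeightedL2

theorem maxwellian_projection_general (N : ℕ) (I : Set ℝ) (hI : MeasurableSet I)
    (lam : Fin (N+1) → ℝ) (hinj : Function.Injective lam)
    (ρ : ℝ → ℝ) (hρ : ∀ v ∈ I, 0 < ρ v) (hmeas : Measurable ρ)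
    (hint : ∀ j ≤ 2*N+1, Integrable (fun v => v ^ j / ρ v) (volume.restrict I))
    (hquad : ∀ R : Polynomial ℝ, R.natDegree ≤ 2*N+1 →
      ∫ v in I, R.eval v / ρ v = ∑ k, R.eval (lam k))
    (P : Matrix (Fin (N+1)) (Fin (N+1)) ℝ) (hP : ∀ i j, P i j = lam j ^ (i:ℕ))
    (Ttil : Fin (N+1) → ℝ → ℝ)
    (hT : ∀ i v, Ttil i v = ∑ k : Fin (N+1), ((Pᵀ)⁻¹ * P⁻¹) k i * v ^ (k:ℕ)) :
    ∃ M : Lp ℝ 2 ((volume.restrict I).withDensity (fun v => ENNReal.ofReal (ρ v))) →L[ℝ]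
          Lp ℝ 2 ((volume.restrict I).withDensity (fun v => ENNReal.ofReal (ρ v))),
      (∀ f, (M f : ℝ → ℝ)
          =ᵐ[(volume.restrict I).withDensity (fun v => ENNReal.ofReal (ρ v))]
        fun v => ∑ i : Fin (N+1), (∫ w in I, w ^ (i:ℕ) * f w) * Ttil i v / ρ v) ∧
      (∀ f, M (M f) = M f) ∧
      (∀ f g, ⟪M f, g⟫ = ⟪f, M g⟫) := by
  set μ := (volume.restrict I).withDensity (fun v => ENNReal.ofReal (ρ v))
  have hmem : ∀ i : Fin (N + 1), MemLp (fun v => v ^ (i : ℕ) / ρ v) 2 μ :=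
    fun i => memLp_two_withDensity_pow_div hI hρ hmeas (hint _ (by omega))
  set H : Fin (N + 1) → Lp ℝ 2 μ := fun i => (hmem i).toLp _
  have hH : ∀ i, H i =ᵐ[μ] fun v => v ^ (i : ℕ) / ρ v := fun i => (hmem i).coeFn_toLp
  obtain rfl : P = (vandermonde lam)ᵀ := by
    ext i j
    simp [hP]
  set V := vandermonde lam
  have hQ : (Vᵀᵀ)⁻¹ * Vᵀ⁻¹ = (Vᵀ * V)⁻¹ := by
    rw [transpose_transpose, Matrix.mul_inv_rev]
  have hgram : gram ℝ H = Vᵀ * V :=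
    gram_eq_vandermonde_transpose_mul_vandermonde hI hρ hmeas (fun R hR => hquad R (by omega)) hH
  have hdet : IsUnit (Vᵀ * V).det := by
    simpa [det_transpose] using det_vandermonde_ne_zero_iff.mpr hinj
  have hGQ : gram ℝ H * (Vᵀ * V)⁻¹ = 1 := by
    rw [hgram]
    exact mul_nonsing_inv _ hdet
  refine ⟨gramProjection H (Vᵀ * V)⁻¹, fun f => ?_, gramProjection_idempotent hGQ,
    inner_gramProjection_comm (isSymm_transpose_mul_self V).inv⟩
  filter_upwards [coeFn_gramProjection H (Vᵀ * V)⁻¹ f, ae_all_iff.mpr hH] with v hMf hHv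
  simp only [hMf, hHv, hT, hQ, inner_eq_setIntegral_pow_mul hI hρ hmeas (hH _), Finset.sum_div,
    mul_div_assoc]

/-- The Maxwellian `Mf = ∑_i (∫ v^i f dv) T̃_i(v)/ρ(v)` defines a bounded linear
projection on `L²(I, ρ dv)` which is self-adjoint for `φ(f,g) = ∫ f g ρ dv`. -/
theorem maxwellian_projection (N : ℕ) (I : Set ℝ) (hI : MeasurableSet I)
    (lam : Fin (N+1) → ℝ) (hinj : Function.Injective lam) (hlamI : ∀ k, lam k ∈ I)
    (ρ : ℝ → ℝ) (hρ : ∀ v ∈ I, 0 < ρ v) (hmeas : Measurable ρ)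
    (hint : ∀ j ≤ 2*N+1, Integrable (fun v => v ^ j / ρ v) (volume.restrict I))
    (hquad : ∀ R : Polynomial ℝ, R.natDegree ≤ 2*N+1 →
      ∫ v in I, R.eval v / ρ v = ∑ k, R.eval (lam k))
    (P : Matrix (Fin (N+1)) (Fin (N+1)) ℝ) (hP : ∀ i j, P i j = lam j ^ (i:ℕ))
    (Ttil : Fin (N+1) → ℝ → ℝ)
    (hT : ∀ i v, Ttil i v = ∑ k : Fin (N+1), ((Pᵀ)⁻¹ * P⁻¹) k i * v ^ (k:ℕ)) :
    ∃ M : Lp ℝ 2 ((volume.restrict I).withDensity (fun v => ENNReal.ofReal (ρ v))) →L[ℝ]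
          Lp ℝ 2 ((volume.restrict I).withDensity (fun v => ENNReal.ofReal (ρ v))),
      (∀ f, (M f : ℝ → ℝ)
          =ᵐ[(volume.restrict I).withDensity (fun v => ENNReal.ofReal (ρ v))]
        fun v => ∑ i : Fin (N+1), (∫ w in I, w ^ (i:ℕ) * f w) * Ttil i v / ρ v) ∧
      (∀ f, M (M f) = M f) ∧
      (∀ f g, ⟪M f, g⟫ = ⟪f, M g⟫) :=
  maxwellian_projection_general N I hI lam hinj ρ hρ hmeas hint hquad P hP Ttil hT
end

section
/- With the same setup, the Maxwellian M satisfies the moment conditions: ∫_I v^j (Mf)(v) dv = ∫_I v^j f(v) dv for 0 ≤ j ≤ N, and ∫_I v^{N+1} (Mf)(v) dv = ∑_{i=0}^N a_i ∫_I v^i f(v) dv, where the a_i are the coefficients of χ(X) = X^{N+1} − ∑ a_i X^i = ∏_k (X − λ_k). -/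
open Matrix MeasureTheory

/-- Moment conditions for the Maxwellian: `∫ v^j Mf = ∫ v^j f` for `j ≤ N`, and
`∫ v^{N+1} Mf = ∑_i a_i ∫ v^i f`, with the `a_i` the coefficients of
`χ(X) = X^{N+1} - ∑ a_i X^i = ∏_k (X - λ_k)`. -/
theorem maxwellian_moment_conditions (N : ℕ) (I : Set ℝ) (hI : MeasurableSet I)
    (lam : Fin (N+1) → ℝ) (hinj : Function.Injective lam) (hlamI : ∀ k, lam k ∈ I)
    (ρ : ℝ → ℝ) (hρ : ∀ v ∈ I, 0 < ρ v) (hmeas : Measurable ρ)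
    (hint : ∀ j ≤ 2*N+1, Integrable (fun v => v ^ j / ρ v) (volume.restrict I))
    (hquad : ∀ R : Polynomial ℝ, R.natDegree ≤ 2*N+1 →
      ∫ v in I, R.eval v / ρ v = ∑ k, R.eval (lam k))
    (P : Matrix (Fin (N+1)) (Fin (N+1)) ℝ) (hP : ∀ i j, P i j = lam j ^ (i:ℕ))
    (Ttil : Fin (N+1) → ℝ → ℝ)
    (hT : ∀ i v, Ttil i v = ∑ k : Fin (N+1), ((Pᵀ)⁻¹ * P⁻¹) k i * v ^ (k:ℕ))
    (a : ℕ → ℝ)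
    (hchi : ∀ x : ℝ, ∏ k : Fin (N+1), (x - lam k) =
      x ^ (N+1) - ∑ i ∈ Finset.range (N+1), a i * x ^ i)
    (f g : ℝ → ℝ)
    (hg : ∀ v, g v = ∑ i : Fin (N+1), (∫ w in I, w ^ (i:ℕ) * f w) * Ttil i v / ρ v)
    (hfint : ∀ j ≤ N+1, Integrable (fun v => v ^ j * f v) (volume.restrict I))
    (hgint : ∀ j ≤ N+1, Integrable (fun v => v ^ j * g v) (volume.restrict I)) :
    (∀ j ≤ N, ∫ v in I, v ^ j * g v = ∫ v in I, v ^ j * f v) ∧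
    (∫ v in I, v ^ (N+1) * g v =
      ∑ i : Fin (N+1), a (i:ℕ) * ∫ v in I, v ^ (i:ℕ) * f v) := by
  classical
  -- invertibility of P
  have hdet : IsUnit P.det := by
    have hPT : Pᵀ = Matrix.vandermonde lam := by
      ext i j; simp [Matrix.vandermonde, hP]
    have hPd : P.det = (Matrix.vandermonde lam).det := by
      rw [← Matrix.det_transpose, hPT]
    rw [hPd, Matrix.det_vandermonde, isUnit_iff_ne_zero]
    refine Finset.prod_ne_zero_iff.mpr fun i _ => ?_
    refine Finset.prod_ne_zero_iff.mpr fun j hj => ?_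
    rw [Finset.mem_Ioi] at hj
    exact sub_ne_zero.mpr fun h => (ne_of_gt hj) (hinj h)
  have hPinv : P * P⁻¹ = 1 := Matrix.mul_nonsing_inv _ hdet
  have hPTinv : Pᵀ * (Pᵀ)⁻¹ = 1 :=
    Matrix.mul_nonsing_inv _ (by rwa [Matrix.det_transpose])
  have hTlam : ∀ i s, Ttil i (lam s) = P⁻¹ s i := by
    intro i s
    rw [hT]
    have h1 : ∀ k : Fin (N+1), ((Pᵀ)⁻¹ * P⁻¹) k i * lam s ^ (k:ℕ)
        = Pᵀ s k * ((Pᵀ)⁻¹ * P⁻¹) k i := by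
      intro k; rw [Matrix.transpose_apply, hP]; ring
    rw [Finset.sum_congr rfl (fun k _ => h1 k), ← Matrix.mul_apply,
        ← Matrix.mul_assoc, hPTinv, Matrix.one_mul]
  -- integrability of poly / ρ
  have hRint : ∀ R : Polynomial ℝ, R.natDegree ≤ 2*N+1 →
      Integrable (fun v => R.eval v / ρ v) (volume.restrict I) := by
    intro R hR
    have hre : (fun v => R.eval v / ρ v)
        = fun v => ∑ p ∈ Finset.range (2*N+1+1), R.coeff p * (v ^ p / ρ v) := by
      funext v
      rw [Polynomial.eval_eq_sum_range' (Nat.lt_succ_of_le hR), Finset.sum_div]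
      exact Finset.sum_congr rfl fun p _ => mul_div_assoc _ _ _
    rw [hre]
    refine integrable_finset_sum _ fun p hp => ?_
    rw [Finset.mem_range] at hp
    exact (hint p (by omega)).const_mul _
  -- key computation
  have key : ∀ j, j ≤ N+1 → ∫ v in I, v ^ j * g v
      = ∑ i : Fin (N+1),
          (∫ w in I, w ^ (i:ℕ) * f w) * ∑ s : Fin (N+1), lam s ^ j * P⁻¹ s i := by
    intro j hj
    set Q : Fin (N+1) → Polynomial ℝ :=
      fun i => ∑ k : Fin (N+1), Polynomial.C (((Pᵀ)⁻¹ * P⁻¹) k i) * Polynomial.X ^ (k:ℕ)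
      with hQ
    have hQdeg : ∀ i, (Q i).natDegree ≤ N := by
      intro i
      refine Polynomial.natDegree_sum_le_of_forall_le _ _ fun k _ => ?_
      exact le_trans (Polynomial.natDegree_C_mul_X_pow_le _ _) (by omega)
    have hQeval : ∀ i v, (Q i).eval v = Ttil i v := by
      intro i v
      rw [hT, hQ]
      simp [Polynomial.eval_finset_sum]
    have hRdeg : ∀ i, (Polynomial.X ^ j * Q i).natDegree ≤ 2*N+1 := by
      intro i
      refine le_trans (Polynomial.natDegree_mul_le) ?_
      have := hQdeg i
      rw [Polynomial.natDegree_X_pow]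
      omega
    have hsplit : ∀ v, v ^ j * g v
        = ∑ i : Fin (N+1), (∫ w in I, w ^ (i:ℕ) * f w)
            * ((Polynomial.X ^ j * Q i).eval v / ρ v) := by
      intro v
      rw [hg v, Finset.mul_sum]
      refine Finset.sum_congr rfl fun i _ => ?_
      rw [Polynomial.eval_mul, Polynomial.eval_pow, Polynomial.eval_X, hQeval]
      ring
    calc ∫ v in I, v ^ j * g v
        = ∫ v in I, ∑ i : Fin (N+1), (∫ w in I, w ^ (i:ℕ) * f w)
            * ((Polynomial.X ^ j * Q i).eval v / ρ v) := by simp_rw [hsplit]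
      _ = ∑ i : Fin (N+1), ∫ v in I, (∫ w in I, w ^ (i:ℕ) * f w)
            * ((Polynomial.X ^ j * Q i).eval v / ρ v) :=
          integral_finset_sum _ (fun i _ => (hRint _ (hRdeg i)).const_mul _)
      _ = ∑ i : Fin (N+1),
            (∫ w in I, w ^ (i:ℕ) * f w) * ∑ s : Fin (N+1), lam s ^ j * P⁻¹ s i := by
          refine Finset.sum_congr rfl fun i _ => ?_
          rw [integral_const_mul, hquad _ (hRdeg i)]
          congr 1
          refine Finset.sum_congr rfl fun s _ => ?_
          rw [Polynomial.eval_mul, Polynomial.eval_pow, Polynomial.eval_X, hQeval, hTlam]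
  constructor
  · intro j hj
    rw [key j (by omega)]
    have hone : ∀ i : Fin (N+1), (∑ s : Fin (N+1), lam s ^ j * P⁻¹ s i)
        = (1 : Matrix (Fin (N+1)) (Fin (N+1)) ℝ) ⟨j, by omega⟩ i := by
      intro i
      rw [← hPinv, Matrix.mul_apply]
      exact Finset.sum_congr rfl fun s _ => by rw [hP]
    simp_rw [hone]
    simp [Matrix.one_apply]
  · rw [key (N+1) le_rfl]
    have hlampow : ∀ s, lam s ^ (N+1)
        = ∑ r : Fin (N+1), a (r:ℕ) * lam s ^ (r:ℕ) := by
      intro s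
      have h0 : ∏ k : Fin (N+1), (lam s - lam k) = 0 :=
        Finset.prod_eq_zero (Finset.mem_univ s) (by simp)
      have h1 := hchi (lam s)
      rw [h0] at h1
      have h2 : lam s ^ (N+1) = ∑ i ∈ Finset.range (N+1), a i * lam s ^ i := by
        linarith
      rw [h2, ← Fin.sum_univ_eq_sum_range]
    have hinner : ∀ i : Fin (N+1),
        (∑ s : Fin (N+1), lam s ^ (N+1) * P⁻¹ s i) = a (i:ℕ) := by
      intro i
      calc ∑ s : Fin (N+1), lam s ^ (N+1) * P⁻¹ s i
          = ∑ s : Fin (N+1), ∑ r : Fin (N+1),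
              a (r:ℕ) * (lam s ^ (r:ℕ) * P⁻¹ s i) := by
            refine Finset.sum_congr rfl fun s _ => ?_
            rw [hlampow s, Finset.sum_mul]
            exact Finset.sum_congr rfl fun r _ => by ring
        _ = ∑ r : Fin (N+1), a (r:ℕ) * ∑ s : Fin (N+1), lam s ^ (r:ℕ) * P⁻¹ s i := by
            rw [Finset.sum_comm]
            exact Finset.sum_congr rfl fun r _ => by rw [Finset.mul_sum]
        _ = ∑ r : Fin (N+1), a (r:ℕ) * (1 : Matrix (Fin (N+1)) (Fin (N+1)) ℝ) r i := by
            refine Finset.sum_congr rfl fun r _ => ?_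
            congr 1
            rw [← hPinv, Matrix.mul_apply]
            exact Finset.sum_congr rfl fun s _ => by rw [hP]
        _ = a (i:ℕ) := by simp [Matrix.one_apply]
    simp_rw [hinner]
    exact Finset.sum_congr rfl fun i _ => mul_comm _ _
end
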